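/- Let $A \subseteq \mathbb{R}^n$ be an affine subspace such that $A$ is the affine span of $A \cap \mathbb{Q}^n$ (i.e., $A$ is defined over the rationals), let $U$ be a nonempty open subset of $A$ (in the subspace topology), and let $x \in U$. Then there exist finitely many points $b_1, \ldots, b_m \in U \cap \mathbb{Q}^n$ and positive real numbers $r_1, \ldots, r_m$ with $\sum_{i=1}^m r_i = 1$ and $x = \sum_{i=1}^m r_i b_i$. -/

import Mathlib

/-!
Write `x = s₀ + ∑ⱼ fⱼ dⱼ` with `s₀` a rational point of `A` and `dⱼ` rational directions of `A`.
The affine map `φ t = s₀ + ∑ⱼ tⱼ dⱼ` sends rational parameters to rational points of `A`, and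
`φ⁻¹ V` is an open neighbourhood of `f`. A small box around `f` with rational corners lies in
`φ⁻¹ V`, so `f` is a convex combination of rational points of `φ⁻¹ V`, and applying `φ` makes `x`
a convex combination of rational points of `U = V ∩ A`. Carathéodory's theorem then lets all
the weights be taken positive.
-/

open Set

def rationalPoints (ι : Type*) : Set (ι → ℝ) := {p | ∀ i, ∃ s : ℚ, p i = (s : ℝ)}

theorem exists_sum_smul_sub_add_of_mem_affineSpan {k E : Type*} [Ring k] [AddCommGroup E]
    [Module k E] {S : Set E} {x : E} (hx : x ∈ affineSpan k S) :
    ∃ s₀ ∈ S, ∃ (m : ℕ) (c : Fin m → k) (p : Fin m → E),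
      (∀ j, p j ∈ S) ∧ x = ∑ j, c j • (p j - s₀) + s₀ := by
  obtain ⟨s₀, hs₀⟩ := (affineSpan_nonempty (k := k)).1 ⟨x, hx⟩
  have hxs : x - s₀ ∈ Submodule.span k ((· -ᵥ s₀) '' S) := by
    rw [← vectorSpan_eq_span_vsub_set_right k hs₀, ← direction_affineSpan]
    exact AffineSubspace.vsub_mem_direction hx (subset_affineSpan k S hs₀)
  obtain ⟨m, c, g, hcg⟩ := Submodule.mem_span_set'.1 hxs
  choose p hp hpg using fun j ↦ (g j).2
  refine ⟨s₀, hs₀, m, c, p, hp, ?_⟩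
  simp only [vsub_eq_sub] at hpg
  simp only [hpg, hcg, sub_add_cancel]

section rationalPoints

variable {ι : Type*}

theorem sum_smul_sub_add_mem_rationalPoints {κ : Type*} [Fintype κ] {t : κ → ℝ}
    {p : κ → ι → ℝ} {s₀ : ι → ℝ} (ht : t ∈ rationalPoints κ)
    (hp : ∀ j, p j ∈ rationalPoints ι) (hs₀ : s₀ ∈ rationalPoints ι) :
    ∑ j, t j • (p j - s₀) + s₀ ∈ rationalPoints ι := by
  intro i
  choose T hT using ht
  choose P hP using hp
  obtain ⟨σ, hσ⟩ := hs₀ i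
  exact ⟨∑ j, T j * (P j i - σ) + σ, by simp [hT, hP, hσ]⟩

theorem exists_affineMap_rationalPoints {A : AffineSubspace ℝ (ι → ℝ)}
    (hA : A = affineSpan ℝ ((A : Set (ι → ℝ)) ∩ rationalPoints ι)) {x : ι → ℝ} (hx : x ∈ A) :
    ∃ (k : ℕ) (φ : (Fin k → ℝ) →ᵃ[ℝ] (ι → ℝ)) (f : Fin k → ℝ),
      φ f = x ∧ (∀ t, φ t ∈ A) ∧ MapsTo φ (rationalPoints (Fin k)) (rationalPoints ι) := by
  obtain ⟨s₀, ⟨hs₀A, hs₀Q⟩, k, f, p, hp, rfl⟩ :=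
    exists_sum_smul_sub_add_of_mem_affineSpan (hA ▸ hx : x ∈ affineSpan ℝ _)
  let φ : (Fin k → ℝ) →ᵃ[ℝ] (ι → ℝ) :=
    (Fintype.linearCombination ℝ fun j ↦ p j - s₀).toAffineMap + AffineMap.const ℝ _ s₀
  have hφ (t : Fin k → ℝ) : φ t = ∑ j, t j • (p j - s₀) + s₀ := by
    simp [φ, Fintype.linearCombination_apply]
  refine ⟨k, φ, f, hφ f, fun t ↦ ?_, fun t ht ↦ ?_⟩
  · have hdir (j : Fin k) : p j - s₀ ∈ A.direction :=
      AffineSubspace.vsub_mem_direction (hp j).1 hs₀A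
    rw [hφ]
    exact AffineSubspace.vadd_mem_of_mem_direction
      (Submodule.sum_mem _ fun j _ ↦ Submodule.smul_mem _ (t j) (hdir j)) hs₀A
  · rw [hφ]
    exact sum_smul_sub_add_mem_rationalPoints ht (fun j ↦ (hp j).2) hs₀Q

theorem mem_convexHull_inter_rationalPoints [Fintype ι] {W : Set (ι → ℝ)} (hW : IsOpen W)
    {f : ι → ℝ} (hf : f ∈ W) : f ∈ convexHull ℝ (W ∩ rationalPoints ι) := by
  obtain ⟨δ, hδ, hball⟩ := Metric.isOpen_iff.1 hW f hf
  choose l hl using fun i ↦ exists_rat_btwn (sub_lt_self (f i) hδ)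
  choose u hu using fun i ↦ exists_rat_btwn (lt_add_of_pos_right (f i) hδ)
  have hcorners : univ.pi (fun i ↦ ({(l i : ℝ), (u i : ℝ)} : Set ℝ)) ⊆ W ∩ rationalPoints ι := by
    intro p hp
    refine ⟨hball ((Metric.mem_ball.trans (dist_pi_lt_iff hδ)).2 fun i ↦ ?_), fun i ↦ ?_⟩
    · rw [Real.dist_eq, abs_sub_lt_iff]
      rcases hp i (mem_univ i) with h | h <;> rw [h] <;> constructor <;> linarith [hl i, hu i]
    · rcases hp i (mem_univ i) with h | h <;> exact ⟨_, h⟩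
  refine convexHull_mono hcorners ?_
  rw [convexHull_pi]
  intro i _
  simp only [convexHull_pair]
  rw [segment_eq_Icc ((hl i).2.le.trans (hu i).1.le)]
  exact ⟨(hl i).2.le, (hu i).1.le⟩

end rationalPoints

theorem exists_fin_pos_convexCombination_of_mem_convexHull {E : Type*} [AddCommGroup E]
    [Module ℝ E] {s : Set E} {x : E} (hx : x ∈ convexHull ℝ s) :
    ∃ (m : ℕ) (b : Fin m → E) (r : Fin m → ℝ),
      (∀ i, b i ∈ s) ∧ (∀ i, 0 < r i) ∧ ∑ i, r i = 1 ∧ x = ∑ i, r i • b i := by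
  obtain ⟨ι, _, z, w, hzs, -, hw, hw1, rfl⟩ := eq_pos_convex_span_of_mem_convexHull hx
  let e := Fintype.equivFin ι
  refine ⟨Fintype.card ι, z ∘ e.symm, w ∘ e.symm, fun i ↦ hzs (mem_range_self _),
    fun i ↦ hw _, ?_, ?_⟩
  · rw [← hw1]
    exact e.symm.sum_comp w
  · exact (e.symm.sum_comp fun i ↦ w i • z i).symm

theorem stmt_16_general (n : ℕ) (A : AffineSubspace ℝ (Fin n → ℝ))
    (hA : A = affineSpan ℝ ((A : Set (Fin n → ℝ)) ∩ {p | ∀ i, ∃ s : ℚ, p i = (s : ℝ)}))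
    (U : Set (Fin n → ℝ))
    (hU : ∃ V : Set (Fin n → ℝ), IsOpen V ∧ U = V ∩ (A : Set (Fin n → ℝ)))
    (x : Fin n → ℝ) (hx : x ∈ U) :
    ∃ (m : ℕ) (b : Fin m → (Fin n → ℝ)) (r : Fin m → ℝ),
      (∀ i, b i ∈ U) ∧ (∀ i j, ∃ s : ℚ, b i j = (s : ℝ)) ∧ (∀ i, 0 < r i) ∧
      ∑ i, r i = 1 ∧ x = ∑ i, r i • b i := by
  obtain ⟨V, hV, rfl⟩ := hU
  obtain ⟨k, φ, f, rfl, hφA, hφQ⟩ := exists_affineMap_rationalPoints hA hx.2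
  have hf : f ∈ convexHull ℝ (φ ⁻¹' V ∩ rationalPoints (Fin k)) :=
    mem_convexHull_inter_rationalPoints (hV.preimage φ.continuous_of_finiteDimensional) hx.1
  have hφf : φ f ∈ convexHull ℝ (V ∩ A ∩ rationalPoints (Fin n)) := by
    refine convexHull_mono ?_ (φ.image_convexHull _ ▸ mem_image_of_mem φ hf)
    rintro _ ⟨t, ⟨htV, htQ⟩, rfl⟩
    exact ⟨⟨htV, hφA t⟩, hφQ htQ⟩
  obtain ⟨m, b, r, hb, hr, hr1, hsum⟩ := exists_fin_pos_convexCombination_of_mem_convexHull hφf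
  exact ⟨m, b, r, fun i ↦ (hb i).1, fun i ↦ (hb i).2, hr, hr1, hsum⟩

theorem stmt_16 (n : ℕ) (A : AffineSubspace ℝ (Fin n → ℝ))
    (hA : A = affineSpan ℝ ((A : Set (Fin n → ℝ)) ∩ {p | ∀ i, ∃ s : ℚ, p i = (s : ℝ)}))
    (U : Set (Fin n → ℝ)) (hUA : U ⊆ (A : Set (Fin n → ℝ)))
    (hU : ∃ V : Set (Fin n → ℝ), IsOpen V ∧ U = V ∩ (A : Set (Fin n → ℝ)))
    (x : Fin n → ℝ) (hx : x ∈ U) :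
    ∃ (m : ℕ) (b : Fin m → (Fin n → ℝ)) (r : Fin m → ℝ),
      (∀ i, b i ∈ U) ∧ (∀ i j, ∃ s : ℚ, b i j = (s : ℝ)) ∧ (∀ i, 0 < r i) ∧
      ∑ i, r i = 1 ∧ x = ∑ i, r i • b i :=
  stmt_16_general n A hA U hU x hx
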